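/- arXiv:1902.10689 — 2 statements merged into one kernel-verified Lean document; each statement's English description precedes it below -/
import Mathlib

section
/- Let G be a finite nested group with chain of centers G = X_0 > X_1 > ⋯ > X_n ≥ 1. Then for every i ∈ {0, …, n}, the image of X_i in G/[X_i,G] equals the center of G/[X_i,G]; that is, X_i/[X_i,G] = Z(G/[X_i,G]). In particular (case i = n), X_n = Z(G). -/
open CategoryTheory

noncomputable section

/-- The kernel of the character of `V`: `{g | χ(g) = χ(1)}`. -/
def charKernel {G : Type} [Group G] (V : FDRep ℂ G) : Set G :=
  {g | V.character g = V.character 1}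

/-- The center of the character of `V`: `{g | |χ(g)| = χ(1)}`. -/
def charCenter {G : Type} [Group G] (V : FDRep ℂ G) : Set G :=
  {g | ((‖V.character g‖ : ℝ) : ℂ) = V.character 1}

/-- The degree `χ(1)` of the character of `V`. -/
def charDegree {G : Type} [Group G] (V : FDRep ℂ G) : ℕ :=
  Module.finrank ℂ V

/-- A group is nested if the centers of its irreducible characters form a chain. -/
def Nested (G : Type) [Group G] : Prop :=
  ∀ V W : FDRep ℂ G, Simple V → Simple W →
    charCenter V ⊆ charCenter W ∨ charCenter W ⊆ charCenter V

/-- `G = X 0 > X 1 > ⋯ > X n ≥ 1` is the chain of centers for `G`: the `X i` are the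
distinct subgroups arising as centers of irreducible characters of `G`. -/
def IsChainOfCenters {G : Type} [Group G] (n : ℕ) (X : ℕ → Subgroup G) : Prop :=
  X 0 = ⊤ ∧ (∀ i ≤ n, (X i).Normal) ∧ (∀ i < n, X (i + 1) < X i) ∧
    (∀ i ≤ n, ∃ V : FDRep ℂ G, Simple V ∧ charCenter V = (X i : Set G)) ∧
    (∀ V : FDRep ℂ G, Simple V → ∃ i ≤ n, charCenter V = (X i : Set G))

/-- `N` is a minimal normal subgroup of `H`. -/
def IsMinimalNormal {H : Type*} [Group H] (N : Subgroup H) : Prop :=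
  N.Normal ∧ N ≠ ⊥ ∧ ∀ K : Subgroup H, K.Normal → K ≠ ⊥ → K ≤ N → K = N

/-- An elementary abelian `p`-group: abelian with every element of order dividing `p`. -/
def IsElementaryAbelian (p : ℕ) (H : Type*) [Group H] : Prop :=
  (∀ a b : H, a * b = b * a) ∧ ∀ a : H, a ^ p = 1

/-!
If `χ` is afforded by an irreducible `ρ`, then `g ∈ Z(χ)` exactly when `ρ g` is a scalar: the
eigenvalues of `ρ g` are roots of unity, and `|χ(g)| = χ(1)` is the equality case of the
triangle inequality. By Schur's lemma, `ρ g` is a scalar exactly when it commutes with `ρ(G)`,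
so `Z(χ) = {g | ∀ a, [a, g] ∈ ker ρ}`. As `[Z(χ), G] ≤ ker ρ`, this identifies `Z(χ)` with
the preimage of the center of `G/[Z(χ), G]`. For `X n = Z(G)`: an element of `X n` lies in
every `Z(χ)`, so its commutators act trivially in every irreducible representation, hence
(Maschke) in the regular one, hence are trivial.
-/

open Polynomial
open scoped commutatorElement

theorem Multiset.eq_of_norm_sum_eq_card {E : Type*} [NormedAddCommGroup E] [NormedSpace ℝ E]
    [StrictConvexSpace ℝ E] {s : Multiset E} (hs : ∀ x ∈ s, ‖x‖ = 1)
    (h : ‖s.sum‖ = Multiset.card s) {x y : E} (hx : x ∈ s) (hy : y ∈ s) : x = y := by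
  classical
  by_contra hxy
  obtain ⟨t, rfl⟩ : ∃ t, s = x ::ₘ y ::ₘ t :=
    ⟨(s.erase x).erase y, by
      rw [Multiset.cons_erase ((Multiset.mem_erase_of_ne (Ne.symm hxy)).mpr hy),
        Multiset.cons_erase hx]⟩
  have hx1 := hs x (by simp)
  have hy1 := hs y (by simp)
  have hxy_lt : ‖x + y‖ < 2 := by
    have := norm_add_lt_of_not_sameRay fun hr => hxy (hr.eq_of_norm_eq (hx1.trans hy1.symm))
    linarith
  have ht : ‖t.sum‖ ≤ Multiset.card t :=
    calc ‖t.sum‖ ≤ (t.map norm).sum := norm_multiset_sum_le t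
      _ = (t.map fun _ => (1 : ℝ)).sum :=
        congrArg _ (Multiset.map_congr rfl fun z hz => hs z (by simp [hz]))
      _ = Multiset.card t := by simp
  have hsum : ‖(x ::ₘ y ::ₘ t).sum‖ ≤ ‖x + y‖ + ‖t.sum‖ := by
    rw [Multiset.sum_cons, Multiset.sum_cons, ← add_assoc]
    exact norm_add_le _ _
  simp only [Multiset.card_cons, Nat.cast_add, Nat.cast_one] at h
  linarith

namespace Module.End

section Field

variable {K V : Type*} [Field K] [AddCommGroup V] [Module K V]

theorem HasEigenvalue.pow_eq_one {f : End K V} {m : ℕ} (hf : f ^ m = 1) {μ : K}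
    (hμ : f.HasEigenvalue μ) : μ ^ m = 1 := by
  obtain ⟨v, hv⟩ := hμ.exists_hasEigenvector
  have := hv.pow_apply m
  rw [hf, one_apply] at this
  exact smul_left_injective K hv.2 (this.symm.trans (one_smul K v).symm)

variable [FiniteDimensional K V]

theorem eq_smul_one_of_charpoly_roots_eq_replicate {f : End K V} (hf : f.IsSemisimple) {c : K}
    (hroots : f.charpoly.roots = Multiset.replicate (finrank K V) c) : f = c • 1 := by
  have hcard : Multiset.card f.charpoly.roots = f.charpoly.natDegree := by
    rw [hroots, Multiset.card_replicate, f.charpoly_natDegree]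
  have hnil : IsNilpotent (f - algebraMap K _ c) := by
    refine ⟨finrank K V, ?_⟩
    have := LinearMap.aeval_self_charpoly f
    rw [← prod_multiset_X_sub_C_of_monic_of_roots_card_eq f.charpoly_monic hcard, hroots] at this
    simpa using this
  have := eq_zero_of_isNilpotent_isSemisimple hnil (isSemisimple_sub_algebraMap_iff.mpr hf)
  rwa [sub_eq_zero, Algebra.algebraMap_eq_smul_one] at this

end Field

theorem exists_eq_smul_one_of_norm_trace_eq_finrank {V : Type*} [AddCommGroup V] [Module ℂ V]
    [FiniteDimensional ℂ V] {f : End ℂ V} {m : ℕ} (hm : m ≠ 0) (hf : f ^ m = 1)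
    (htr : ‖LinearMap.trace ℂ V f‖ = finrank ℂ V) : ∃ c : ℂ, f = c • 1 := by
  have hss : f.IsSemisimple := by
    have hsep : (X ^ m - 1 : ℂ[X]).Separable :=
      X_pow_sub_one_separable_iff.mpr (Nat.cast_ne_zero.mpr hm)
    exact isSemisimple_of_squarefree_aeval_eq_zero hsep.squarefree (by simp [hf])
  have hsplit : f.charpoly.Splits := IsAlgClosed.splits _
  have hnorm : ∀ μ ∈ f.charpoly.roots, ‖μ‖ = 1 := fun μ hμ =>
    Complex.norm_eq_one_of_pow_eq_one (HasEigenvalue.pow_eq_one hf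
      ((hasEigenvalue_iff_isRoot_charpoly f μ).mpr (isRoot_of_mem_roots hμ))) hm
  have hcard : Multiset.card f.charpoly.roots = finrank ℂ V := by
    rw [← f.charpoly_natDegree, ← splits_iff_card_roots]
    exact hsplit
  rcases (finrank ℂ V).eq_zero_or_pos with h0 | hpos
  · have : Subsingleton V := finrank_zero_iff.mp h0
    exact ⟨0, Subsingleton.elim _ _⟩
  obtain ⟨c, hc⟩ := Multiset.card_pos_iff_exists_mem.mp (hcard ▸ hpos)
  refine ⟨c, eq_smul_one_of_charpoly_roots_eq_replicate hss ?_⟩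
  rw [← hcard, Multiset.eq_replicate_card]
  refine fun μ hμ => Multiset.eq_of_norm_sum_eq_card hnorm ?_ hμ hc
  rw [← trace_eq_sum_roots_charpoly_of_splits hsplit, htr, hcard]

end Module.End

theorem MonoidHom.commutatorElement_mem_ker_iff {G M : Type*} [Group G] [Monoid M] (f : G →* M)
    {a b : G} : ⁅a, b⁆ ∈ f.ker ↔ Commute (f a) (f b) := by
  rw [mem_ker, ← Units.val_one, ← f.coe_toHomUnits, ← Units.ext_iff, map_commutatorElement,
    commutatorElement_eq_one_iff_commute, ← Commute.units_val_iff]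
  rfl

theorem Representation.IsIrreducible.simple_fdRep {G : Type} [Group G] [Finite G] {V : Type}
    [AddCommGroup V] [Module ℂ V] [FiniteDimensional ℂ V] (ρ : Representation ℂ G V)
    [ρ.IsIrreducible] : Simple (FDRep.of ρ) := by
  rw [FDRep.simple_iff_end_is_rank_one, ← (FDRep.forget₂HomLinearEquiv _ _).finrank_eq,
    (Rep.homLinearEquiv _ _).finrank_eq]
  exact finrank_intertwiningMap_self ρ

-- Maschke: a proper nonzero subrepresentation has a complement, and both are smaller.
theorem Representation.apply_eq_one_of_forall_simple {G : Type} [Group G] [Finite G] {g : G}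
    (hg : ∀ V : FDRep ℂ G, Simple V → V.ρ g = 1) {W : Type} [AddCommGroup W] [Module ℂ W]
    [FiniteDimensional ℂ W] (ρ : Representation ℂ G W) : ρ g = 1 := by
  induction hn : Module.finrank ℂ W using Nat.strong_induction_on generalizing W with
  | _ n ih =>
  rcases subsingleton_or_nontrivial W with hW | hW
  · exact Subsingleton.elim _ _
  by_cases hτ : ∃ τ : Subrepresentation ρ, τ ≠ ⊥ ∧ τ ≠ ⊤
  · obtain ⟨τ, hτbot, hτtop⟩ := hτ
    obtain ⟨τ', hτ'⟩ := exists_isCompl τ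
    have hτ'top : τ' ≠ ⊤ := fun h => hτbot (eq_bot_of_isCompl_top (h ▸ hτ'))
    have hfix : ∀ σ : Subrepresentation ρ, σ ≠ ⊤ → ∀ v ∈ σ, ρ g v = v := by
      intro σ hσ v hv
      have hlt : Module.finrank ℂ σ.toSubmodule < n :=
        hn ▸ Submodule.finrank_lt fun h => hσ (Subrepresentation.toSubmodule_injective h)
      have hσg := ih _ hlt σ.toRepresentation rfl
      exact congrArg Subtype.val (LinearMap.congr_fun hσg ⟨v, hv⟩)
    ext v
    have hv : v ∈ (τ ⊔ τ').toSubmodule := hτ'.sup_eq_top ▸ Submodule.mem_top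
    obtain ⟨a, ha, b, hb, rfl⟩ := Submodule.mem_sup.mp hv
    simp [hfix τ hτtop a ha, hfix τ' hτ'top b hb]
  · push Not at hτ
    have : ρ.IsIrreducible :=
      { exists_pair_ne :=
          ⟨⊥, ⊤, fun h => bot_ne_top (congrArg Subrepresentation.toSubmodule h)⟩
        eq_bot_or_eq_top := fun τ => or_iff_not_imp_left.mpr (hτ τ) }
    exact hg _ this.simple_fdRep

namespace FDRep

variable {G : Type} [Group G]

theorem nontrivial_of_simple (V : FDRep ℂ G) [Simple V] : Nontrivial V := by
  by_contra hV
  rw [not_nontrivial_iff_subsingleton] at hV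
  exact id_nonzero V (Action.Hom.ext (by ext; exact Subsingleton.elim _ _))

theorem ρ_pow_card_eq_one (V : FDRep ℂ G) (g : G) : V.ρ g ^ Nat.card G = 1 := by
  rw [← map_pow, pow_card_eq_one', map_one]

theorem exists_ρ_eq_smul_one_of_commute (V : FDRep ℂ G) [Simple V] {g : G}
    (hg : ∀ a : G, Commute (V.ρ a) (V.ρ g)) : ∃ c : ℂ, V.ρ g = c • 1 := by
  let φ : V ⟶ V :=
    ⟨FGModuleCat.ofHom (V.ρ g), fun a => by ext v; exact LinearMap.congr_fun (hg a).symm v⟩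
  obtain ⟨c, hc⟩ := endomorphism_simple_eq_smul_id ℂ φ
  refine ⟨c, LinearMap.ext fun v => ?_⟩
  have := congr(($hc).hom.hom.hom v)
  simp only [Action.smul_hom, Action.id_hom] at this
  exact this.symm

variable [Finite G]

theorem eq_one_of_forall_simple {g : G} (hg : ∀ V : FDRep ℂ G, Simple V → V.ρ g = 1) :
    g = 1 := by
  have := LinearMap.congr_fun (Representation.apply_eq_one_of_forall_simple hg
    (Representation.ofMulAction ℂ G G)) (MonoidAlgebra.single (1 : G) (1 : ℂ))
  rw [Representation.ofMulAction_single, smul_eq_mul, mul_one] at this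
  exact MonoidAlgebra.single_left_injective one_ne_zero this

theorem mem_charCenter_iff_exists_smul_one (V : FDRep ℂ G) [Nontrivial V] {g : G} :
    g ∈ charCenter V ↔ ∃ c : ℂ, V.ρ g = c • 1 := by
  have hcard : Nat.card G ≠ 0 := Nat.card_pos.ne'
  constructor
  · intro hg
    refine Module.End.exists_eq_smul_one_of_norm_trace_eq_finrank hcard (V.ρ_pow_card_eq_one g) ?_
    rw [charCenter, Set.mem_ofPred_eq, char_one] at hg
    exact_mod_cast hg
  · rintro ⟨c, hc⟩
    have hc1 : c ^ Nat.card G = 1 := by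
      have h := V.ρ_pow_card_eq_one g
      rw [hc, _root_.smul_pow, one_pow] at h
      exact smul_left_injective ℂ one_ne_zero (h.trans (one_smul ℂ 1).symm)
    have hχ : V.character g = c * Module.finrank ℂ V := by
      rw [character, hc, map_smul, LinearMap.trace_one, smul_eq_mul]
    rw [charCenter, Set.mem_ofPred_eq, char_one, hχ, norm_mul,
      Complex.norm_eq_one_of_pow_eq_one hc1 hcard]
    simp

theorem mem_charCenter_iff_forall_commute (V : FDRep ℂ G) [Simple V] {g : G} :
    g ∈ charCenter V ↔ ∀ a : G, Commute (V.ρ a) (V.ρ g) := by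
  have := V.nontrivial_of_simple
  rw [mem_charCenter_iff_exists_smul_one]
  refine ⟨?_, V.exists_ρ_eq_smul_one_of_commute⟩
  rintro ⟨c, hc⟩ a
  rw [hc]
  exact (Commute.one_right _).smul_right c

theorem center_subset_charCenter (V : FDRep ℂ G) [Simple V] :
    (Subgroup.center G : Set G) ⊆ charCenter V := fun _ hz =>
  V.mem_charCenter_iff_forall_commute.mpr fun a =>
    Commute.map (Subgroup.mem_center_iff.mp hz a) V.ρ

theorem mem_center_of_forall_mem_charCenter {z : G}
    (hz : ∀ V : FDRep ℂ G, Simple V → z ∈ charCenter V) : z ∈ Subgroup.center G := by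
  refine Subgroup.mem_center_iff.mpr fun g => Eq.symm ?_
  refine commutatorElement_eq_one_iff_commute.mp (eq_one_of_forall_simple fun V hV => ?_)
  exact MonoidHom.mem_ker.mp (V.ρ.commutatorElement_mem_ker_iff.mpr
    (V.mem_charCenter_iff_forall_commute.mp (hz V hV) g).symm)

theorem upperCentralSeriesStep_eq_of_charCenter (V : FDRep ℂ G) [Simple V] {H N : Subgroup G}
    [N.Normal] (hH : (H : Set G) = charCenter V) (hN : N = ⁅H, ⊤⁆) :
    Subgroup.upperCentralSeriesStep N = H := by
  have hmem {x : G} : x ∈ H ↔ ∀ a : G, Commute (V.ρ a) (V.ρ x) := by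
    rw [← SetLike.mem_coe, hH, mem_charCenter_iff_forall_commute]
  have hker : N ≤ V.ρ.ker := by
    rw [hN, Subgroup.commutator_le]
    exact fun x hx y _ => V.ρ.commutatorElement_mem_ker_iff.mpr (hmem.mp hx y).symm
  ext g
  rw [Subgroup.mem_upperCentralSeriesStep, hmem]
  constructor
  · exact fun hg a => (V.ρ.commutatorElement_mem_ker_iff.mp (hker (hg a))).symm
  · intro hg a
    rw [hN]
    exact Subgroup.commutator_mem_commutator (hmem.mpr hg) (Subgroup.mem_top a)

end FDRep

/-- if `G` is nested with chain of centers `X 0 > ⋯ > X n`, then for every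
`i ≤ n` the image of `X i` in `G ⧸ ⁅X i, G⁆` is the center of that quotient; in
particular `X n = Z(G)`. -/
theorem chain_image_is_center (G : Type) [Group G] [Fintype G]
    (n : ℕ) (X : ℕ → Subgroup G) (hX : IsChainOfCenters n X) :
    (∀ i ≤ n, ∀ (N : Subgroup G) [N.Normal], N = ⁅X i, (⊤ : Subgroup G)⁆ →
        Subgroup.map (QuotientGroup.mk' N) (X i) = Subgroup.center (G ⧸ N)) ∧
      X n = Subgroup.center G := by
  obtain ⟨-, -, hlt, hexists, hall⟩ := hX
  refine ⟨fun i hi N _ hN => ?_, ?_⟩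
  · obtain ⟨V, hV, hVX⟩ := hexists i hi
    rw [← FDRep.upperCentralSeriesStep_eq_of_charCenter V hVX.symm hN,
      Subgroup.upperCentralSeriesStep_eq_comap_center]
    exact Subgroup.map_comap_eq_self_of_surjective (QuotientGroup.mk'_surjective N) _
  have hanti : ∀ j ≤ n, X n ≤ X j := fun j hj =>
    Nat.decreasingInduction (fun k hk ih => ih.trans (hlt k hk).le) le_rfl hj
  obtain ⟨V, hV, hVX⟩ := hexists n le_rfl
  refine le_antisymm (fun z hz => FDRep.mem_center_of_forall_mem_charCenter fun W hW => ?_) ?_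
  · obtain ⟨j, hj, hWX⟩ := hall W hW
    exact hWX ▸ hanti j hj hz
  · exact SetLike.coe_subset_coe.mp (hVX ▸ V.center_subset_charCenter)
end
end

section
/- Let G be a finite group with a chain of normal subgroups G = X_0 > X_1 > ⋯ > X_n ≥ 1 such that every normal subgroup N of G satisfies, for all i with 1 ≤ i ≤ n, either [X_{i-1},G] ≤ N or N ≤ X_i. Then for each i with 1 ≤ i ≤ n, one of the following holds: (1) [X_{i-1},G] ≤ X_i, or (2) the image of [X_{i-1},G]X_i in G/X_i is the unique minimal normal subgroup of G/X_i. -/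
open CategoryTheory

noncomputable section

/-! A nontrivial normal subgroup `J` lying in every nontrivial normal subgroup is the unique
minimal normal subgroup. In `G ⧸ M` the image of `C ⊔ M` is such a subgroup as soon as every
normal subgroup of `G` either contains `C` or lies in `M`: the preimage of a nontrivial normal
subgroup of `G ⧸ M` is normal and not contained in `M`. -/

section MinimalNormal

variable {H : Type*} [Group H] {J : Subgroup H}

theorem isMinimalNormal_of_forall_le (hJn : J.Normal) (hJ : J ≠ ⊥)
    (hle : ∀ K : Subgroup H, K.Normal → K ≠ ⊥ → J ≤ K) : IsMinimalNormal J :=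
  ⟨hJn, hJ, fun K hKn hK hKJ => le_antisymm hKJ (hle K hKn hK)⟩

theorem IsMinimalNormal.eq_of_forall_le {K : Subgroup H} (hK : IsMinimalNormal K)
    (hJn : J.Normal) (hJ : J ≠ ⊥) (hle : ∀ K : Subgroup H, K.Normal → K ≠ ⊥ → J ≤ K) :
    K = J :=
  (hK.2.2 J hJn hJ (hle K hK.1 hK.2.1)).symm

end MinimalNormal

namespace QuotientGroup

variable {G : Type*} [Group G] {C M : Subgroup G} [M.Normal]

theorem map_mk'_sup_eq_bot_iff : (C ⊔ M).map (mk' M) = ⊥ ↔ C ≤ M := by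
  rw [Subgroup.map_eq_bot_iff, ker_mk', sup_le_iff]
  exact and_iff_left le_rfl

theorem map_mk'_sup_le_of_ne_bot
    (hdich : ∀ N : Subgroup G, N.Normal → C ≤ N ∨ N ≤ M)
    {K : Subgroup (G ⧸ M)} (hKn : K.Normal) (hK : K ≠ ⊥) : (C ⊔ M).map (mk' M) ≤ K := by
  have hMK : M ≤ K.comap (mk' M) := (ker_mk' M).ge.trans ((mk' M).ker_le_comap K)
  rcases hdich _ (hKn.comap (mk' M)) with hCK | hKM
  · exact Subgroup.map_le_iff_le_comap.2 (sup_le hCK hMK)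
  · refine absurd ?_ hK
    rw [← Subgroup.map_comap_eq_self_of_surjective (mk'_surjective M) K,
      Subgroup.map_eq_bot_iff, ker_mk']
    exact hKM

end QuotientGroup

theorem unique_minimal_normal_of_chain_general (G : Type) [Group G]
    (n : ℕ) (X : ℕ → Subgroup G) (hnorm : ∀ i ≤ n, (X i).Normal)
    (hcond : ∀ N : Subgroup G, N.Normal →
      ∀ i < n, ⁅X i, (⊤ : Subgroup G)⁆ ≤ N ∨ N ≤ X (i + 1)) :
    ∀ i < n, ⁅X i, (⊤ : Subgroup G)⁆ ≤ X (i + 1) ∨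
      ∀ (M : Subgroup G) [M.Normal], M = X (i + 1) →
        IsMinimalNormal
            (Subgroup.map (QuotientGroup.mk' M) (⁅X i, (⊤ : Subgroup G)⁆ ⊔ X (i + 1))) ∧
          ∀ K : Subgroup (G ⧸ M), IsMinimalNormal K →
            K = Subgroup.map (QuotientGroup.mk' M) (⁅X i, (⊤ : Subgroup G)⁆ ⊔ X (i + 1)) := by
  intro i hi
  refine or_iff_not_imp_left.2 fun hC M _ hM => ?_
  subst hM
  have := hnorm i hi.le
  have hJn : ((⁅X i, ⊤⁆ ⊔ X (i + 1)).map (QuotientGroup.mk' (X (i + 1)))).Normal :=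
    Subgroup.Normal.map inferInstance _ (QuotientGroup.mk'_surjective _)
  have hJ := mt QuotientGroup.map_mk'_sup_eq_bot_iff.1 hC
  have hle := fun K =>
    QuotientGroup.map_mk'_sup_le_of_ne_bot (K := K) (hcond · · i hi)
  exact ⟨isMinimalNormal_of_forall_le hJn hJ hle,
    fun K hK => hK.eq_of_forall_le hJn hJ hle⟩

/-- if `G` has a chain of normal subgroups `G = X 0 > ⋯ > X n ≥ 1` such that
every normal subgroup `N` satisfies `⁅X (i-1), G⁆ ≤ N` or `N ≤ X i` for all `1 ≤ i ≤ n`,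
then for each such `i` either `⁅X (i-1), G⁆ ≤ X i`, or the image of `⁅X (i-1), G⁆ • X i`
in `G ⧸ X i` is the unique minimal normal subgroup of `G ⧸ X i`. -/
theorem unique_minimal_normal_of_chain (G : Type) [Group G] [Fintype G]
    (n : ℕ) (X : ℕ → Subgroup G) (htop : X 0 = ⊤) (hnorm : ∀ i ≤ n, (X i).Normal)
    (hstrict : ∀ i < n, X (i + 1) < X i)
    (hcond : ∀ N : Subgroup G, N.Normal →
      ∀ i < n, ⁅X i, (⊤ : Subgroup G)⁆ ≤ N ∨ N ≤ X (i + 1)) :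
    ∀ i < n, ⁅X i, (⊤ : Subgroup G)⁆ ≤ X (i + 1) ∨
      ∀ (M : Subgroup G) [M.Normal], M = X (i + 1) →
        IsMinimalNormal
            (Subgroup.map (QuotientGroup.mk' M) (⁅X i, (⊤ : Subgroup G)⁆ ⊔ X (i + 1))) ∧
          ∀ K : Subgroup (G ⧸ M), IsMinimalNormal K →
            K = Subgroup.map (QuotientGroup.mk' M) (⁅X i, (⊤ : Subgroup G)⁆ ⊔ X (i + 1)) :=
  unique_minimal_normal_of_chain_general G n X hnorm hcond
end
end
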